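/- arXiv:2011.14359 — 2 statements merged into one kernel-verified Lean document; each statement's English description precedes it below -/
import Mathlib

section
/- Let V_{i,t} and W_{i,t} (1 ≤ i ≤ M, 0 ≤ t ≤ T) be square-integrable random variables such that variables with different first index i are independent, E[V_{i,t}] = V_t and E[W_{i,t}] = 0. For each i let the covariance matrix of the vector (V_{i,0},...,V_{i,T}, W_{i,0},...,W_{i,T}) be invertible with precision matrix having blocks H_{i,11}, H_{i,12}, H_{i,21}, H_{i,22}. Then, under the constraint Σ_i α_{i,t} = 1 for all t (with β unconstrained), the weights α_i* = H_{i,11}(Σ_{i'} H_{i',11})^{-1} e and β_i* = H_{i,21}(Σ_{i'} H_{i',11})^{-1} e minimize the variance of Σ_{i,t}(α_{i,t} V_{i,t} + β_{i,t} W_{i,t}). -/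
open MeasureTheory ProbabilityTheory Matrix

/-- Covariance of two real random variables. -/
noncomputable def cov {Ω : Type*} [MeasurableSpace Ω] (μ : Measure Ω) (X Y : Ω → ℝ) : ℝ :=
  ∫ ω, (X ω - ∫ x, X x ∂μ) * (Y ω - ∫ x, Y x ∂μ) ∂μ

/-!
Writing `x i = (α i, β i)`, independence across `i` makes the variance of the estimator the
sum of the quadratic forms `x i ⬝ᵥ C i *ᵥ x i`, with every `C i` positive semidefinite. The
candidate `x⋆ i = (C i)⁻¹ (λ, 0)` with `λ = (∑ H₁₁)⁻¹ e` satisfies the Lagrange condition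
`C i x⋆ i = (λ, 0)` with a multiplier `λ` that is the same for every `i`, and its `α`-parts sum
to `e`. For any admissible `x` the cross terms `∑ i, (x i - x⋆ i) ⬝ᵥ C i x⋆ i` therefore
reduce to `λ ⬝ᵥ ∑ i, (α i - α⋆ i) = 0`, so expanding around `x⋆` shows its variance is minimal.
-/

section Covariance

variable {Ω : Type*} [MeasurableSpace Ω] {μ : Measure Ω} {ι κ : Type*} [Fintype ι] [Fintype κ]

noncomputable def covarianceMatrix (μ : Measure Ω) (Z : ι → Ω → ℝ) : Matrix ι ι ℝ :=
  of fun a b => cov[Z a, Z b; μ]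

lemma memLp_fun_sum_mul {Z : ι → Ω → ℝ} (hZ : ∀ i, MemLp (Z i) 2 μ) (c : ι → ℝ) :
    MemLp (fun ω => ∑ i, c i * Z i ω) 2 μ :=
  memLp_finsetSum _ fun i _ => (hZ i).const_mul (c i)

variable [IsFiniteMeasure μ]

lemma covariance_fun_sum_mul_fun_sum_mul {X : ι → Ω → ℝ} {Y : κ → Ω → ℝ}
    (hX : ∀ i, MemLp (X i) 2 μ) (hY : ∀ j, MemLp (Y j) 2 μ) (c : ι → ℝ) (d : κ → ℝ) :
    cov[fun ω => ∑ i, c i * X i ω, fun ω => ∑ j, d j * Y j ω; μ]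
      = ∑ i, ∑ j, c i * d j * cov[X i, Y j; μ] := by
  rw [covariance_fun_sum_fun_sum (fun i => (hX i).const_mul (c i))
    (fun j => (hY j).const_mul (d j))]
  simp only [covariance_const_mul_left, covariance_const_mul_right, mul_assoc, mul_left_comm]

lemma variance_fun_sum_mul {Z : ι → Ω → ℝ} (hZ : ∀ i, MemLp (Z i) 2 μ) (c : ι → ℝ) :
    Var[fun ω => ∑ i, c i * Z i ω; μ] = c ⬝ᵥ (covarianceMatrix μ Z *ᵥ c) := by
  rw [← covariance_self (memLp_fun_sum_mul hZ c).aemeasurable,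
    covariance_fun_sum_mul_fun_sum_mul hZ hZ]
  simp only [dotProduct, mulVec, covarianceMatrix, of_apply, Finset.mul_sum]
  exact Finset.sum_congr rfl fun i _ => Finset.sum_congr rfl fun j _ => by ring

lemma posSemidef_covarianceMatrix {Z : ι → Ω → ℝ} (hZ : ∀ i, MemLp (Z i) 2 μ) :
    (covarianceMatrix μ Z).PosSemidef := by
  refine .of_dotProduct_mulVec_nonneg ?_ fun c => ?_
  · ext a b
    exact covariance_comm _ _
  · simp [← variance_fun_sum_mul hZ, variance_nonneg]

lemma variance_fun_sum_sum_mul_of_covariance_eq_zero {Z : ι → κ → Ω → ℝ}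
    (hZ : ∀ i a, MemLp (Z i a) 2 μ) (hZ₀ : ∀ i j, i ≠ j → ∀ a b, cov[Z i a, Z j b; μ] = 0)
    (c : ι → κ → ℝ) :
    Var[fun ω => ∑ i, ∑ a, c i a * Z i a ω; μ]
      = ∑ i, c i ⬝ᵥ (covarianceMatrix μ (Z i) *ᵥ c i) := by
  rw [variance_fun_sum (X := fun i ω => ∑ a, c i a * Z i a ω)
    fun i => memLp_fun_sum_mul (hZ i) (c i)]
  refine Finset.sum_congr rfl fun i _ => ?_
  rw [Finset.sum_eq_single i, covariance_self (memLp_fun_sum_mul (hZ i) (c i)).aemeasurable,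
    variance_fun_sum_mul (hZ i)]
  · intro j _ hji
    simp [covariance_fun_sum_mul_fun_sum_mul (hZ i) (hZ j), hZ₀ i j hji.symm]
  · simp

end Covariance

lemma covariance_sumElim_eq_zero_of_indepFun {Ω ι κ : Type*} [MeasurableSpace Ω] {μ : Measure Ω}
    [IsProbabilityMeasure μ] {V W : ι → κ → Ω → ℝ}
    (hV : ∀ i t, MemLp (V i t) 2 μ) (hW : ∀ i t, MemLp (W i t) 2 μ)
    (hindep : ∀ i₁ i₂, i₁ ≠ i₂ → ∀ t₁ t₂,
      IndepFun (V i₁ t₁) (V i₂ t₂) μ ∧ IndepFun (W i₁ t₁) (W i₂ t₂) μ ∧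
      IndepFun (V i₁ t₁) (W i₂ t₂) μ)
    {i j : ι} (hij : i ≠ j) (a b : κ ⊕ κ) :
    cov[Sum.elim (V i) (W i) a, Sum.elim (V j) (W j) b; μ] = 0 := by
  rcases a with t | t <;> rcases b with s | s
  · exact (hindep i j hij t s).1.covariance_eq_zero (hV i t) (hV j s)
  · exact (hindep i j hij t s).2.2.covariance_eq_zero (hV i t) (hW j s)
  · exact (hindep j i hij.symm s t).2.2.symm.covariance_eq_zero (hW i t) (hV j s)
  · exact (hindep i j hij t s).2.1.covariance_eq_zero (hW i t) (hW j s)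

section QuadraticForm

variable {ι n : Type*} [Fintype ι] [Fintype n]

lemma Matrix.IsHermitian.dotProduct_mulVec_comm {A : Matrix n n ℝ} (hA : A.IsHermitian)
    (x y : n → ℝ) : x ⬝ᵥ (A *ᵥ y) = y ⬝ᵥ (A *ᵥ x) := by
  rw [dotProduct_mulVec, ← mulVec_transpose, dotProduct_comm,
    ← conjTranspose_eq_transpose_of_trivial, hA]

lemma dotProduct_mulVec_add_self {A : Matrix n n ℝ} (hA : A.IsHermitian) (x d : n → ℝ) :
    (x + d) ⬝ᵥ (A *ᵥ (x + d))
      = x ⬝ᵥ (A *ᵥ x) + 2 * (d ⬝ᵥ (A *ᵥ x)) + d ⬝ᵥ (A *ᵥ d) := by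
  rw [mulVec_add, add_dotProduct, dotProduct_add, dotProduct_add, hA.dotProduct_mulVec_comm x d]
  ring

/-- First-order optimality for a sum of positive semidefinite quadratic forms. -/
lemma sum_dotProduct_mulVec_le_of_sum_eq_zero {A : ι → Matrix n n ℝ}
    (hA : ∀ i, (A i).PosSemidef) {x₀ x : ι → n → ℝ}
    (hx : ∑ i, (x i - x₀ i) ⬝ᵥ (A i *ᵥ x₀ i) = 0) :
    ∑ i, x₀ i ⬝ᵥ (A i *ᵥ x₀ i) ≤ ∑ i, x i ⬝ᵥ (A i *ᵥ x i) := by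
  have expand : ∀ i, x i ⬝ᵥ (A i *ᵥ x i) = x₀ i ⬝ᵥ (A i *ᵥ x₀ i)
      + 2 * ((x i - x₀ i) ⬝ᵥ (A i *ᵥ x₀ i)) + (x i - x₀ i) ⬝ᵥ (A i *ᵥ (x i - x₀ i)) := fun i => by
    rw [← dotProduct_mulVec_add_self (hA i).1, add_sub_cancel]
  simp_rw [expand, Finset.sum_add_distrib, ← Finset.mul_sum, hx, mul_zero, add_zero]
  exact le_add_of_nonneg_right (Finset.sum_nonneg fun i _ => (hA i).dotProduct_mulVec_nonneg _)

lemma isUnit_det_sum_toBlocks₁₁_inv {m n : Type*} [Fintype m] [Fintype n] [DecidableEq m]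
    [DecidableEq n] [Nonempty ι] {C : ι → Matrix (m ⊕ n) (m ⊕ n) ℝ} (hC : ∀ i, (C i).PosDef) :
    IsUnit (∑ i, (C i)⁻¹.toBlocks₁₁).det :=
  (isUnit_iff_isUnit_det _).mp
    (posDef_sum Finset.univ_nonempty fun i _ => (hC i).inv.submatrix Sum.inl_injective).isUnit

end QuadraticForm

lemma sum_sumElim_sub_dotProduct_sumElim_zero {ι m n : Type*} [Fintype ι] [Fintype m]
    [Fintype n] {α α₀ : ι → m → ℝ} (hα : ∀ t, ∑ i, α i t = ∑ i, α₀ i t) (β β₀ : ι → n → ℝ)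
    (v : m → ℝ) :
    ∑ i, (Sum.elim (α i) (β i) - Sum.elim (α₀ i) (β₀ i)) ⬝ᵥ Sum.elim v 0 = 0 := by
  simp only [dotProduct, Fintype.sum_sum_type, Pi.sub_apply, Sum.elim_inl, Sum.elim_inr,
    Pi.zero_apply, mul_zero, Finset.sum_const_zero, add_zero]
  rw [Finset.sum_comm]
  simp only [← Finset.sum_mul, Finset.sum_sub_distrib, hα, sub_self, zero_mul,
    Finset.sum_const_zero]

lemma mulVec_sumElim_zero {l m n o α : Type*} [Fintype m] [Fintype n]
    [NonUnitalNonAssocSemiring α] (A : Matrix (l ⊕ o) (m ⊕ n) α) (v : m → α) :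
    A *ᵥ Sum.elim v 0 = Sum.elim (A.toBlocks₁₁ *ᵥ v) (A.toBlocks₂₁ *ᵥ v) := by
  conv_lhs => rw [← fromBlocks_toBlocks A]
  rw [fromBlocks_mulVec]
  simp

theorem stmt6_general {Ω : Type*} [MeasurableSpace Ω] (μ : Measure Ω) [IsProbabilityMeasure μ]
    (M T : ℕ) (hM : 0 < M)
    (V W : Fin M → Fin (T + 1) → Ω → ℝ)
    (hV : ∀ i t, MemLp (V i t) 2 μ) (hW : ∀ i t, MemLp (W i t) 2 μ)
    (hindep : ∀ i₁ i₂, i₁ ≠ i₂ → ∀ t₁ t₂,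
      IndepFun (V i₁ t₁) (V i₂ t₂) μ ∧ IndepFun (W i₁ t₁) (W i₂ t₂) μ ∧
      IndepFun (V i₁ t₁) (W i₂ t₂) μ)
    (C : Fin M → Matrix (Fin (T + 1) ⊕ Fin (T + 1)) (Fin (T + 1) ⊕ Fin (T + 1)) ℝ)
    (hC : ∀ i a b, C i a b = cov μ (Sum.elim (V i) (W i) a) (Sum.elim (V i) (W i) b))
    (hCinv : ∀ i, IsUnit (C i))
    (H11 H21 : Fin M → Matrix (Fin (T + 1)) (Fin (T + 1)) ℝ)
    (hH11 : ∀ i, H11 i = ((C i)⁻¹).toBlocks₁₁)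
    (hH21 : ∀ i, H21 i = ((C i)⁻¹).toBlocks₂₁)
    (e : Fin (T + 1) → ℝ) (he : e = fun _ => 1)
    (αstar βstar : Fin M → Fin (T + 1) → ℝ)
    (hαstar : ∀ i, αstar i = H11 i *ᵥ ((∑ i', H11 i')⁻¹ *ᵥ e))
    (hβstar : ∀ i, βstar i = H21 i *ᵥ ((∑ i', H11 i')⁻¹ *ᵥ e)) :
    (∀ t, ∑ i, αstar i t = 1) ∧
    ∀ α β : Fin M → Fin (T + 1) → ℝ, (∀ t, ∑ i, α i t = 1) →
      variance (fun ω => ∑ i, ∑ t, (αstar i t * V i t ω + βstar i t * W i t ω)) μ ≤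
      variance (fun ω => ∑ i, ∑ t, (α i t * V i t ω + β i t * W i t ω)) μ := by
  have : Nonempty (Fin M) := Fin.pos_iff_nonempty.mp hM
  have hZ : ∀ i a, MemLp (Sum.elim (V i) (W i) a) 2 μ := fun i a => a.rec (hV i) (hW i)
  have hCZ : ∀ i, C i = covarianceMatrix μ (Sum.elim (V i) (W i)) := fun i => ext (hC i)
  have hCpd : ∀ i, (C i).PosDef := fun i =>
    (hCZ i ▸ posSemidef_covarianceMatrix (hZ i)).posDef_iff_isUnit.2 (hCinv i)
  have hH : IsUnit (∑ i, H11 i).det := by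
    simpa only [hH11] using isUnit_det_sum_toBlocks₁₁_inv hCpd
  have hαsum : ∀ t, ∑ i, αstar i t = 1 := fun t => by
    rw [← Finset.sum_apply, funext hαstar, ← sum_mulVec, mulVec_mulVec, mul_nonsing_inv _ hH,
      one_mulVec, he]
  have hstar : ∀ i, C i *ᵥ Sum.elim (αstar i) (βstar i) = Sum.elim ((∑ i', H11 i')⁻¹ *ᵥ e) 0 :=
    fun i => by
      rw [hαstar, hβstar, hH11, hH21, ← mulVec_sumElim_zero, mulVec_mulVec,
        mul_nonsing_inv _ ((isUnit_iff_isUnit_det _).mp (hCinv i)), one_mulVec]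
  have hvar : ∀ α β : Fin M → Fin (T + 1) → ℝ,
      variance (fun ω => ∑ i, ∑ t, (α i t * V i t ω + β i t * W i t ω)) μ
        = ∑ i, Sum.elim (α i) (β i) ⬝ᵥ (C i *ᵥ Sum.elim (α i) (β i)) := fun α β => by
    simp_rw [hCZ, ← variance_fun_sum_sum_mul_of_covariance_eq_zero hZ
      (fun i j hij => covariance_sumElim_eq_zero_of_indepFun hV hW hindep hij),
      Fintype.sum_sum_type, Sum.elim_inl, Sum.elim_inr, Finset.sum_add_distrib]
  refine ⟨hαsum, fun α β hα => ?_⟩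
  rw [hvar, hvar]
  refine sum_dotProduct_mulVec_le_of_sum_eq_zero (fun i => (hCpd i).posSemidef) ?_
  simp_rw [hstar]
  exact sum_sumElim_sub_dotProduct_sumElim_zero (fun t => by rw [hα, hαsum]) _ _ _

theorem stmt6 {Ω : Type*} [MeasurableSpace Ω] (μ : Measure Ω) [IsProbabilityMeasure μ]
    (M T : ℕ) (hM : 0 < M)
    (V W : Fin M → Fin (T + 1) → Ω → ℝ)
    (hV : ∀ i t, MemLp (V i t) 2 μ) (hW : ∀ i t, MemLp (W i t) 2 μ)
    (hindep : ∀ i₁ i₂, i₁ ≠ i₂ → ∀ t₁ t₂,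
      IndepFun (V i₁ t₁) (V i₂ t₂) μ ∧ IndepFun (W i₁ t₁) (W i₂ t₂) μ ∧
      IndepFun (V i₁ t₁) (W i₂ t₂) μ)
    (Vt : Fin (T + 1) → ℝ) (hmeanV : ∀ i t, ∫ ω, V i t ω ∂μ = Vt t)
    (hmeanW : ∀ i t, ∫ ω, W i t ω ∂μ = 0)
    (C : Fin M → Matrix (Fin (T + 1) ⊕ Fin (T + 1)) (Fin (T + 1) ⊕ Fin (T + 1)) ℝ)
    (hC : ∀ i a b, C i a b = cov μ (Sum.elim (V i) (W i) a) (Sum.elim (V i) (W i) b))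
    (hCinv : ∀ i, IsUnit (C i))
    (H11 H21 : Fin M → Matrix (Fin (T + 1)) (Fin (T + 1)) ℝ)
    (hH11 : ∀ i, H11 i = ((C i)⁻¹).toBlocks₁₁)
    (hH21 : ∀ i, H21 i = ((C i)⁻¹).toBlocks₂₁)
    (e : Fin (T + 1) → ℝ) (he : e = fun _ => 1)
    (αstar βstar : Fin M → Fin (T + 1) → ℝ)
    (hαstar : ∀ i, αstar i = H11 i *ᵥ ((∑ i', H11 i')⁻¹ *ᵥ e))
    (hβstar : ∀ i, βstar i = H21 i *ᵥ ((∑ i', H11 i')⁻¹ *ᵥ e)) :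
    (∀ t, ∑ i, αstar i t = 1) ∧
    ∀ α β : Fin M → Fin (T + 1) → ℝ, (∀ t, ∑ i, α i t = 1) →
      variance (fun ω => ∑ i, ∑ t, (αstar i t * V i t ω + βstar i t * W i t ω)) μ ≤
      variance (fun ω => ∑ i, ∑ t, (α i t * V i t ω + β i t * W i t ω)) μ :=
  stmt6_general μ M T hM V W hV hW hindep C hC hCinv H11 H21 hH11 hH21 e he αstar βstar hαstar
    hβstar
end

section
/- Let (X_{j,t})_{j=1..n, t=0..T} and (Y_{j,t})_{j=1..n, t=0..T} be i.i.d. copies (across j) of bounded random vectors (X_t), (Y_t) with μ_{x_t} = E[X_t] ≠ 0 and θ_t = E[Y_t]/μ_{x_t}. Define θ̂_t = (Σ_j Y_{j,t})/(Σ_j X_{j,t}) and the statistic S_n = (1/n) Σ_j (Σ_t (Y_{j,t} − θ̂_t X_{j,t})/((1/n)Σ_k X_{k,t}))². Then S_n converges almost surely to E[(Σ_t (Y_t − θ_t X_t)/μ_{x_t})²]. -/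
open MeasureTheory ProbabilityTheory Filter Topology Finset

/-!
For each `t`, the summand of the statistic is `Y_{j,t} α_t(n) - X_{j,t} β_t(n)` with the plug-in
weights `α_t(n) = 1 / x̄_t`, `β_t(n) = ȳ_t / x̄_t²`, and the summand of the limit has the same form
with the weights `1 / μ_{x_t}` and `θ_t / μ_{x_t}`. By the strong law the sample means converge
almost surely, so the plug-in weights converge to the limiting ones; since the data are bounded, the
plug-in summands then converge to the limiting ones uniformly in `j`. Hence the average of their
squares has the same limit as the average of the squared limiting summands, which is the
expectation by the strong law once more.
-/

theorem ae_tendsto_avg_comp_of_abs_le {Ω E : Type*} [MeasurableSpace Ω] [MeasurableSpace E]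
    {μ : Measure Ω} [IsFiniteMeasure μ] {Z : ℕ → Ω → E}
    (hindep : Pairwise fun i j => IndepFun (Z i) (Z j) μ)
    (hid : ∀ j, IdentDistrib (Z j) (Z 0) μ μ)
    {f : E → ℝ} (hf : Measurable f) {D : ℝ} (hD : ∀ ω, |f (Z 0 ω)| ≤ D) :
    ∀ᵐ ω ∂μ, Tendsto (fun n : ℕ => (1 / (n : ℝ)) * ∑ j ∈ range n, f (Z j ω))
      atTop (𝓝 (∫ ω, f (Z 0 ω) ∂μ)) := by
  have hint : Integrable (fun ω => f (Z 0 ω)) μ :=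
    .of_bound (hf.comp_aemeasurable (hid 0).aemeasurable_fst).aestronglyMeasurable D
      (ae_of_all _ hD)
  filter_upwards [strong_law_ae_real (fun j ω => f (Z j ω)) hint
    (fun i j hij => (hindep hij).comp hf hf) (fun i => (hid i).comp hf)] with ω hω
  simpa only [one_div_mul_eq_div] using hω

theorem abs_avg_le {f : ℕ → ℝ} {δ : ℝ} (hδ : 0 ≤ δ) (hf : ∀ j, |f j| ≤ δ) (n : ℕ) :
    |(1 / (n : ℝ)) * ∑ j ∈ range n, f j| ≤ δ := by
  rcases Nat.eq_zero_or_pos n with rfl | hn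
  · simpa using hδ
  have hn' : (0 : ℝ) < n := Nat.cast_pos.2 hn
  calc |(1 / (n : ℝ)) * ∑ j ∈ range n, f j|
      ≤ (1 / (n : ℝ)) * ∑ j ∈ range n, |f j| := by
        rw [abs_mul, abs_of_pos (one_div_pos.2 hn')]
        gcongr
        exact abs_sum_le_sum_abs _ _
    _ ≤ (1 / (n : ℝ)) * ∑ j ∈ range n, δ := by gcongr with j; exact hf j
    _ = δ := by field_simp; simp

theorem tendsto_avg_sq_of_abs_sub_le {a : ℕ → ℕ → ℝ} {b ε : ℕ → ℝ} {M L : ℝ}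
    (hab : ∀ n j, |a n j - b j| ≤ ε n) (hε : Tendsto ε atTop (𝓝 0)) (hb : ∀ j, |b j| ≤ M)
    (hL : Tendsto (fun n : ℕ => (1 / (n : ℝ)) * ∑ j ∈ range n, b j ^ 2) atTop (𝓝 L)) :
    Tendsto (fun n : ℕ => (1 / (n : ℝ)) * ∑ j ∈ range n, a n j ^ 2) atTop (𝓝 L) := by
  have hε0 : ∀ n, 0 ≤ ε n := fun n => (abs_nonneg _).trans (hab n 0)
  have hM : 0 ≤ M := (abs_nonneg _).trans (hb 0)
  have hsq : ∀ n j, |a n j ^ 2 - b j ^ 2| ≤ ε n * (ε n + 2 * M) := by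
    intro n j
    have hsum : |a n j + b j| ≤ ε n + 2 * M := calc
      |a n j + b j| = |(a n j - b j) + 2 * b j| := by ring_nf
      _ ≤ |a n j - b j| + |2 * b j| := abs_add_le _ _
      _ = |a n j - b j| + 2 * |b j| := by rw [abs_mul, abs_two]
      _ ≤ ε n + 2 * M := by gcongr; exacts [hab n j, hb j]
    rw [sq_sub_sq, abs_mul, mul_comm]
    exact mul_le_mul (hab n j) hsum (abs_nonneg _) (hε0 n)
  have hdiff : Tendsto (fun n : ℕ => (1 / (n : ℝ)) * ∑ j ∈ range n, (a n j ^ 2 - b j ^ 2))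
      atTop (𝓝 0) := by
    refine squeeze_zero_norm (fun n => abs_avg_le ?_ (hsq n) n) ?_
    · exact mul_nonneg (hε0 n) (by linarith [hε0 n])
    · simpa using hε.mul (hε.add_const (2 * M))
  simpa [sum_sub_distrib, mul_sub] using hL.add hdiff

section ResidualSum

variable {ι : Type*} [Fintype ι]

def residualSum (α β : ι → ℝ) (z : (ι → ℝ) × (ι → ℝ)) : ℝ :=
  ∑ t, (z.2 t * α t - z.1 t * β t)

theorem measurable_residualSum (α β : ι → ℝ) : Measurable (residualSum α β) := by
  unfold residualSum; fun_prop

theorem abs_residualSum_le {α β : ι → ℝ} {z : (ι → ℝ) × (ι → ℝ)} {C : ℝ}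
    (hz : ∀ t, |z.1 t| ≤ C ∧ |z.2 t| ≤ C) :
    |residualSum α β z| ≤ C * ∑ t, (|α t| + |β t|) := by
  rw [mul_sum]
  refine (abs_sum_le_sum_abs _ _).trans (sum_le_sum fun t _ => ?_)
  calc |z.2 t * α t - z.1 t * β t| ≤ |z.2 t| * |α t| + |z.1 t| * |β t| := by
        rw [← abs_mul, ← abs_mul]; exact abs_sub _ _
    _ ≤ C * (|α t| + |β t|) := by
        rw [mul_add]; gcongr; exacts [(hz t).2, (hz t).1]

theorem residualSum_sub_residualSum (α β α' β' : ι → ℝ) (z : (ι → ℝ) × (ι → ℝ)) :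
    residualSum α β z - residualSum α' β' z = residualSum (α - α') (β - β') z := by
  simp only [residualSum, ← sum_sub_distrib, Pi.sub_apply]
  exact sum_congr rfl fun t _ => by ring

theorem tendsto_avg_sq_residualSum {z : ℕ → (ι → ℝ) × (ι → ℝ)} {C : ℝ}
    (hz : ∀ j t, |(z j).1 t| ≤ C ∧ |(z j).2 t| ≤ C)
    {α β : ℕ → ι → ℝ} {α₀ β₀ : ι → ℝ}
    (hα : Tendsto α atTop (𝓝 α₀)) (hβ : Tendsto β atTop (𝓝 β₀)) {L : ℝ}
    (hL : Tendsto (fun n : ℕ => (1 / (n : ℝ)) * ∑ j ∈ range n, residualSum α₀ β₀ (z j) ^ 2)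
      atTop (𝓝 L)) :
    Tendsto (fun n : ℕ => (1 / (n : ℝ)) * ∑ j ∈ range n, residualSum (α n) (β n) (z j) ^ 2)
      atTop (𝓝 L) := by
  refine tendsto_avg_sq_of_abs_sub_le
    (ε := fun n => C * ∑ t, (|(α n - α₀) t| + |(β n - β₀) t|)) (fun n j => ?_) ?_
    (fun j => abs_residualSum_le (hz j)) hL
  · rw [residualSum_sub_residualSum]
    exact abs_residualSum_le (hz j)
  · have hsub := fun t => ((tendsto_pi_nhds.1 hα t).sub_const (α₀ t)).abs.add
      ((tendsto_pi_nhds.1 hβ t).sub_const (β₀ t)).abs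
    simpa using (tendsto_finsetSum univ fun t _ => hsub t).const_mul C

end ResidualSum

theorem sub_div_mul_mul_div_eq (x y sx sy c : ℝ) :
    (y - sy / sx * x) / (c * sx) = y * (c * sx)⁻¹ - x * (c * sy / (c * sx) / (c * sx)) := by
  rcases eq_or_ne c 0 with rfl | hc
  · simp
  rw [mul_div_mul_left _ _ hc]
  ring

theorem stmt11_general {Ω : Type*} [MeasurableSpace Ω] (μ : Measure Ω) [IsProbabilityMeasure μ]
    (T : ℕ)
    (Z : ℕ → Ω → (Fin (T + 1) → ℝ) × (Fin (T + 1) → ℝ))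
    (hindep : iIndepFun Z μ)
    (hid : ∀ j, IdentDistrib (Z j) (Z 0) μ μ)
    (C : ℝ) (hbound : ∀ j t ω, |(Z j ω).1 t| ≤ C ∧ |(Z j ω).2 t| ≤ C)
    (μx : Fin (T + 1) → ℝ) (hμx : ∀ t, μx t = ∫ ω, (Z 0 ω).1 t ∂μ) (hμx0 : ∀ t, μx t ≠ 0)
    (θ : Fin (T + 1) → ℝ) (hθ : ∀ t, θ t = (∫ ω, (Z 0 ω).2 t ∂μ) / μx t) :
    ∀ᵐ ω ∂μ, Tendsto (fun n : ℕ =>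
        (1 / (n : ℝ)) * ∑ j ∈ Finset.range n,
          (∑ t, ((Z j ω).2 t
              - ((∑ k ∈ Finset.range n, (Z k ω).2 t) / (∑ k ∈ Finset.range n, (Z k ω).1 t))
                * (Z j ω).1 t)
            / ((1 / (n : ℝ)) * ∑ k ∈ Finset.range n, (Z k ω).1 t)) ^ 2)
      atTop (nhds (∫ ω, (∑ t, ((Z 0 ω).2 t - θ t * (Z 0 ω).1 t) / μx t) ^ 2 ∂μ)) := by
  have hpair : Pairwise fun i j => IndepFun (Z i) (Z j) μ := fun i j hij => hindep.indepFun hij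
  have hlim : ∀ z : (Fin (T + 1) → ℝ) × (Fin (T + 1) → ℝ),
      ∑ t, (z.2 t - θ t * z.1 t) / μx t
        = residualSum (fun t => (μx t)⁻¹) (fun t => θ t / μx t) z :=
    fun z => sum_congr rfl fun t _ => by ring
  have hX : ∀ t, ∀ᵐ ω ∂μ, Tendsto (fun n : ℕ => (1 / (n : ℝ)) * ∑ k ∈ range n, (Z k ω).1 t)
      atTop (𝓝 (μx t)) := fun t => by
    simpa only [hμx] using ae_tendsto_avg_comp_of_abs_le hpair hid (f := fun z => z.1 t)
      (by fun_prop) (fun ω => (hbound 0 t ω).1)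
  have hY := fun t => ae_tendsto_avg_comp_of_abs_le hpair hid (f := fun z => z.2 t)
    (by fun_prop) (fun ω => (hbound 0 t ω).2)
  have hL := ae_tendsto_avg_comp_of_abs_le hpair hid
    ((measurable_residualSum (fun t => (μx t)⁻¹) (fun t => θ t / μx t)).pow_const 2)
    fun ω => by
      rw [abs_pow]
      exact pow_le_pow_left₀ (abs_nonneg _) (abs_residualSum_le (hbound 0 · ω)) 2
  simp only [hlim]
  filter_upwards [hL, ae_all_iff.2 hX, ae_all_iff.2 hY] with ω hLω hXω hYω
  refine (tendsto_avg_sq_residualSum (hbound · · ω)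
    (α := fun n t => ((1 / (n : ℝ)) * ∑ k ∈ range n, (Z k ω).1 t)⁻¹)
    (β := fun n t => ((1 / (n : ℝ)) * ∑ k ∈ range n, (Z k ω).2 t)
      / ((1 / (n : ℝ)) * ∑ k ∈ range n, (Z k ω).1 t)
      / ((1 / (n : ℝ)) * ∑ k ∈ range n, (Z k ω).1 t))
    (tendsto_pi_nhds.2 fun t => (hXω t).inv₀ (hμx0 t))
    (tendsto_pi_nhds.2 fun t => ?_) hLω).congr fun n => ?_
  · have hβ := ((hYω t).div (hXω t) (hμx0 t)).div (hXω t) (hμx0 t)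
    rw [← hθ] at hβ
    exact hβ
  · refine congrArg _ (sum_congr rfl fun j _ => congrArg (· ^ 2) ?_)
    exact sum_congr rfl fun t _ => (sub_div_mul_mul_div_eq ..).symm

theorem stmt11 {Ω : Type*} [MeasurableSpace Ω] (μ : Measure Ω) [IsProbabilityMeasure μ]
    (T : ℕ)
    (Z : ℕ → Ω → (Fin (T + 1) → ℝ) × (Fin (T + 1) → ℝ))
    (hmeas : ∀ j, Measurable (Z j))
    (hindep : iIndepFun Z μ)
    (hid : ∀ j, IdentDistrib (Z j) (Z 0) μ μ)
    (C : ℝ) (hbound : ∀ j t ω, |(Z j ω).1 t| ≤ C ∧ |(Z j ω).2 t| ≤ C)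
    (μx : Fin (T + 1) → ℝ) (hμx : ∀ t, μx t = ∫ ω, (Z 0 ω).1 t ∂μ) (hμx0 : ∀ t, μx t ≠ 0)
    (θ : Fin (T + 1) → ℝ) (hθ : ∀ t, θ t = (∫ ω, (Z 0 ω).2 t ∂μ) / μx t) :
    ∀ᵐ ω ∂μ, Tendsto (fun n : ℕ =>
        (1 / (n : ℝ)) * ∑ j ∈ Finset.range n,
          (∑ t, ((Z j ω).2 t
              - ((∑ k ∈ Finset.range n, (Z k ω).2 t) / (∑ k ∈ Finset.range n, (Z k ω).1 t))
                * (Z j ω).1 t)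
            / ((1 / (n : ℝ)) * ∑ k ∈ Finset.range n, (Z k ω).1 t)) ^ 2)
      atTop (nhds (∫ ω, (∑ t, ((Z 0 ω).2 t - θ t * (Z 0 ω).1 t) / μx t) ^ 2 ∂μ)) :=
  stmt11_general μ T Z hindep hid C hbound μx hμx hμx0 θ hθ
end
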